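/- Let 0 < q < 1, 0 < μ < 1, ν ≤ μ, and let k be a positive integer with μ < q^k. If X is a random variable on ℤ_{≥0} with distribution φ_{q,μ,ν}(·|∞), i.e. P(X = ℓ) = μ^ℓ ((ν/μ;q)_ℓ / (q;q)_ℓ) ((μ;q)_∞/(ν;q)_∞), then E[q^{−kX}] = (ν/q; q^{−1})_k / (μ/q; q^{−1})_k, i.e. ∑_{ℓ≥0} q^{−kℓ} φ_{q,μ,ν}(ℓ|∞) = (ν q^{−k};q)_k / (μ q^{−k};q)_k, with the series converging since μ q^{−k} < 1. -/

import Mathlib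

open Filter Topology MeasureTheory

/-- Finite q-Pochhammer symbol `(a;q)_n`. -/
noncomputable def qPoch (a q : ℝ) (n : ℕ) : ℝ := ∏ i ∈ Finset.range n, (1 - a * q ^ i)

/-- Infinite q-Pochhammer symbol `(a;q)_∞`. -/
noncomputable def qPochInf (a q : ℝ) : ℝ := ∏' i : ℕ, (1 - a * q ^ i)

/-- The q-beta-binomial weight `φ_{q,μ,ν}(s|y)`. -/
noncomputable def phiW (q μ ν : ℝ) (s y : ℕ) : ℝ :=
  μ ^ s * (qPoch (ν / μ) q s * qPoch μ q (y - s) / qPoch ν q y) *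
    (qPoch q q y / (qPoch q q s * qPoch q q (y - s)))

/-- The weight `φ_{q,μ,ν}(s|∞)`. -/
noncomputable def phiInfW (q μ ν : ℝ) (s : ℕ) : ℝ :=
  μ ^ s * (qPoch (ν / μ) q s / qPoch q q s) * (qPochInf μ q / qPochInf ν q)

/-- The q-hypergeometric weight `ψ_{q,a,b,c}(p)`. -/
noncomputable def psiW (q a b c : ℝ) (p : ℕ) : ℝ :=
  (c / (a * b)) ^ p * (qPoch a q p * qPoch b q p / (qPoch q q p * qPoch c q p)) *
    (qPochInf c q * qPochInf (c / (a * b)) q / (qPochInf (c / a) q * qPochInf (c / b) q))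

/-- The q-Hahn PushTASEP update probability `P_{ℓ,g}(L)`. -/
noncomputable def Phahn (q μ ν : ℝ) (ℓ g L : ℕ) : ℝ :=
  ∑ p ∈ Finset.range (min ℓ L + 1),
    phiW q⁻¹ (q ^ g) (μ * ν * q ^ ((g : ℤ) - 1)) p ℓ *
      psiW q (ν * μ⁻¹ * q ^ p) (ν * q ^ g) (ν ^ 2 * q ^ (g + p)) (L - p)


/-!
Weighting `φ_{q,μ,ν}(ℓ|∞)` by `q^{-kℓ}` turns the moment into `F(z) (μ;q)_∞/(ν;q)_∞` with
`z = μ q^{-k}`, where `F(z) = ∑ c_n z^n`, `c_n = (a;q)_n/(q;q)_n` and `a = ν/μ`. By the q-binomial theorem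
`F(z) = (az;q)_∞/(z;q)_∞`, and `(xq^{-k};q)_∞ = (xq^{-k};q)_k (x;q)_∞` cancels the infinite products.

The q-binomial theorem follows from the coefficient recursion
`c_{n+1}(1 - q^{n+1}) = c_n(1 - aq^n)`, which gives `(1 - z) F(z) = (1 - az) F(qz)`. Iterating,
`F(z) (z;q)_n = (az;q)_n F(q^n z)`, and `F(q^n z) → F(0) = 1` because the coefficients converge,
hence are bounded, so that `F` is continuous at `0`.
-/

open Finset

section QPochhammer

variable {a q : ℝ}

lemma qPoch_succ (a q : ℝ) (n : ℕ) : qPoch a q (n + 1) = qPoch a q n * (1 - a * q ^ n) :=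
  prod_range_succ _ _

lemma one_sub_mul_pow_ne_zero (ha : |a| < 1) (hq : |q| ≤ 1) (i : ℕ) : 1 - a * q ^ i ≠ 0 := by
  have h : |a * q ^ i| < 1 := by
    rw [abs_mul, abs_pow]
    exact (mul_le_of_le_one_right (abs_nonneg a) (pow_le_one₀ (abs_nonneg q) hq)).trans_lt ha
  exact sub_ne_zero.mpr fun h1 => by simp [← h1] at h

lemma one_sub_mul_pow_pos (hq0 : 0 ≤ q) (hq1 : q ≤ 1) (ha : a < 1) (i : ℕ) :
    0 < 1 - a * q ^ i := by
  rcases le_or_gt a 0 with h | h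
  · nlinarith [pow_nonneg hq0 i]
  · linarith [mul_le_of_le_one_right h.le (pow_le_one₀ hq0 hq1 (n := i))]

lemma qPoch_ne_zero (ha : |a| < 1) (hq : |q| ≤ 1) (n : ℕ) : qPoch a q n ≠ 0 :=
  prod_ne_zero_iff.mpr fun i _ => one_sub_mul_pow_ne_zero ha hq i

lemma multipliable_one_sub_mul_pow (a : ℝ) (hq : |q| < 1) :
    Multipliable fun i : ℕ => 1 - a * q ^ i := by
  simpa [sub_eq_add_neg] using
    Real.multipliable_one_add_of_summable ((summable_geometric_of_abs_lt_one hq).mul_left (-a))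

lemma tendsto_qPoch (a : ℝ) (hq : |q| < 1) :
    Tendsto (qPoch a q) atTop (𝓝 (qPochInf a q)) :=
  (multipliable_one_sub_mul_pow a hq).hasProd.tendsto_prod_nat

lemma qPochInf_ne_zero (hq : |q| < 1) (ha : ∀ i, 1 - a * q ^ i ≠ 0) : qPochInf a q ≠ 0 := by
  have hsum : Summable fun i : ℕ => ‖-(a * q ^ i)‖ := by
    simpa [abs_mul] using (summable_geometric_of_lt_one (abs_nonneg q) hq).mul_left |a|
  simpa [qPochInf, sub_eq_add_neg] using
    tprod_one_add_ne_zero_of_summable (by simpa [sub_eq_add_neg] using ha) hsum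

lemma qPoch_mul_qPochInf (a : ℝ) (hq : |q| < 1) (n : ℕ) :
    qPoch a q n * qPochInf (a * q ^ n) q = qPochInf a q := by
  have hshift : (fun i : ℕ => 1 - a * q ^ n * q ^ i) = fun i => 1 - a * q ^ (i + n) := by
    funext i; ring
  have hm := multipliable_one_sub_mul_pow (a * q ^ n) hq
  rw [hshift] at hm
  unfold qPoch qPochInf
  rw [hshift]
  exact hm.prod_mul_tprod_nat_mul'

lemma qPochInf_mul_zpow_neg (a : ℝ) (hq0 : q ≠ 0) (hq : |q| < 1) (k : ℕ) :
    qPochInf (a * q ^ (-(k : ℤ))) q = qPoch (a * q ^ (-(k : ℤ))) q k * qPochInf a q := by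
  rw [← qPoch_mul_qPochInf _ hq k, mul_assoc, ← zpow_natCast, ← zpow_add₀ hq0]
  simp

end QPochhammer

/-- The coefficient of `z ^ n` in the q-binomial theorem, not the Gaussian binomial coefficient. -/
noncomputable def qBinomialCoeff (a q : ℝ) (n : ℕ) : ℝ := qPoch a q n / qPoch q q n

noncomputable def qBinomialSeries (a q z : ℝ) : ℝ := ∑' n, qBinomialCoeff a q n * z ^ n

section QBinomial

variable {a q z : ℝ}

lemma qBinomialCoeff_zero : qBinomialCoeff a q 0 = 1 := by simp [qBinomialCoeff, qPoch]

lemma qBinomialCoeff_succ_mul (hq : |q| < 1) (n : ℕ) :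
    qBinomialCoeff a q (n + 1) * (1 - q ^ (n + 1)) = qBinomialCoeff a q n * (1 - a * q ^ n) := by
  have h0 := qPoch_ne_zero hq hq.le n
  have h1 : 1 - q ^ (n + 1) ≠ 0 := by simpa [pow_succ'] using one_sub_mul_pow_ne_zero hq hq.le n
  rw [qBinomialCoeff, qBinomialCoeff, qPoch_succ, qPoch_succ, ← pow_succ']
  field_simp

lemma exists_abs_qBinomialCoeff_le (a : ℝ) (hq : |q| < 1) :
    ∃ C, ∀ n, |qBinomialCoeff a q n| ≤ C := by
  have hlim : Tendsto (qBinomialCoeff a q) atTop (𝓝 (qPochInf a q / qPochInf q q)) :=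
    (tendsto_qPoch a hq).div (tendsto_qPoch q hq)
      (qPochInf_ne_zero hq (one_sub_mul_pow_ne_zero hq hq.le))
  obtain ⟨C, hC⟩ := (Metric.isBounded_range_of_tendsto _ hlim).exists_norm_le
  exact ⟨C, fun n => hC _ ⟨n, rfl⟩⟩

lemma summable_qBinomialCoeff_mul_pow (a : ℝ) (hq : |q| < 1) (hz : |z| < 1) :
    Summable fun n => qBinomialCoeff a q n * z ^ n := by
  obtain ⟨C, hC⟩ := exists_abs_qBinomialCoeff_le a hq
  refine .of_norm_bounded ((summable_geometric_of_lt_one (abs_nonneg z) hz).mul_left C)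
    fun n => ?_
  rw [norm_mul, norm_pow, Real.norm_eq_abs, Real.norm_eq_abs]
  exact mul_le_mul_of_nonneg_right (hC n) (by positivity)

lemma qBinomialSeries_zero : qBinomialSeries a q 0 = 1 := by
  rw [qBinomialSeries, tsum_eq_single 0 fun n hn => by simp [hn]]
  simp [qBinomialCoeff_zero]

lemma continuousAt_qBinomialSeries_zero (a : ℝ) (hq : |q| < 1) :
    ContinuousAt (qBinomialSeries a q) 0 := by
  obtain ⟨C, hC⟩ := exists_abs_qBinomialCoeff_le a hq
  have hcont : ContinuousOn (qBinomialSeries a q) (Metric.closedBall 0 2⁻¹) := by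
    refine continuousOn_tsum (fun n => by fun_prop)
      ((summable_geometric_of_lt_one (by norm_num) (by norm_num : (2⁻¹ : ℝ) < 1)).mul_left C)
      fun n w hw => ?_
    rw [mem_closedBall_zero_iff] at hw
    rw [norm_mul, norm_pow, Real.norm_eq_abs]
    exact mul_le_mul (hC n) (pow_le_pow_left₀ (norm_nonneg w) hw n) (by positivity)
      ((abs_nonneg _).trans (hC n))
  exact hcont.continuousAt (Metric.closedBall_mem_nhds 0 (by norm_num))

lemma tendsto_qBinomialSeries_pow_mul (a : ℝ) (hq : |q| < 1) (z : ℝ) :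
    Tendsto (fun n : ℕ => qBinomialSeries a q (q ^ n * z)) atTop (𝓝 1) := by
  have h := (continuousAt_qBinomialSeries_zero a hq).tendsto.comp
    (by simpa using (tendsto_pow_atTop_nhds_zero_of_abs_lt_one hq).mul_const z)
  simpa [Function.comp_def, qBinomialSeries_zero] using h

lemma one_sub_mul_qBinomialSeries (hq : |q| < 1) (hz : |z| < 1) :
    (1 - z) * qBinomialSeries a q z = (1 - a * z) * qBinomialSeries a q (q * z) := by
  have hqz : |q * z| < 1 := by
    rw [abs_mul]; exact (mul_le_of_le_one_left (abs_nonneg z) hq.le).trans_lt hz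
  have hS := (summable_qBinomialCoeff_mul_pow a hq hz).hasSum
  have hT := (summable_qBinomialCoeff_mul_pow a hq hqz).hasSum
  have hdiff : HasSum (fun n => qBinomialCoeff a q n * (1 - q ^ n) * z ^ n)
      (qBinomialSeries a q z - qBinomialSeries a q (q * z)) := by
    refine (hS.sub hT).congr_fun fun n => ?_
    rw [mul_pow]; ring
  have hshift : HasSum (fun n => qBinomialCoeff a q n * (1 - a * q ^ n) * z ^ (n + 1))
      (z * qBinomialSeries a q z - a * z * qBinomialSeries a q (q * z)) := by
    refine ((hS.mul_left z).sub (hT.mul_left (a * z))).congr_fun fun n => ?_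
    rw [mul_pow]; ring
  have hreindexed : HasSum (fun n => qBinomialCoeff a q n * (1 - q ^ n) * z ^ n)
      (z * qBinomialSeries a q z - a * z * qBinomialSeries a q (q * z)) := by
    refine (hasSum_nat_add_iff' 1).mp ?_
    simpa [qBinomialCoeff_succ_mul hq] using hshift
  linear_combination hdiff.unique hreindexed

lemma qBinomialSeries_mul_qPoch (hq : |q| < 1) (hz : |z| < 1) (n : ℕ) :
    qBinomialSeries a q z * qPoch z q n = qPoch (a * z) q n * qBinomialSeries a q (q ^ n * z) := by
  induction n with
  | zero => simp [qPoch]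
  | succ n ih =>
    have hqz : |q ^ n * z| < 1 := by
      rw [abs_mul, abs_pow]
      exact (mul_le_of_le_one_left (abs_nonneg z) (pow_le_one₀ (abs_nonneg q) hq.le)).trans_lt hz
    have step := one_sub_mul_qBinomialSeries (a := a) hq hqz
    rw [qPoch_succ, qPoch_succ, pow_succ', mul_assoc q]
    linear_combination (1 - z * q ^ n) * ih + qPoch (a * z) q n * step

theorem qBinomialSeries_eq (hq : |q| < 1) (hz : |z| < 1) :
    qBinomialSeries a q z = qPochInf (a * z) q / qPochInf z q := by
  rw [eq_div_iff (qPochInf_ne_zero hq (one_sub_mul_pow_ne_zero hz hq.le))]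
  have hlhs := (tendsto_qPoch z hq).const_mul (qBinomialSeries a q z)
  have hrhs := (tendsto_qPoch (a * z) hq).mul (tendsto_qBinomialSeries_pow_mul a hq z)
  simpa using tendsto_nhds_unique (hlhs.congr (qBinomialSeries_mul_qPoch hq hz)) hrhs

end QBinomial

lemma tsum_zpow_mul_phiInfW (q μ ν : ℝ) (k : ℕ) :
    ∑' l : ℕ, q ^ (-((k : ℤ) * l)) * phiInfW q μ ν l
      = qBinomialSeries (ν / μ) q (μ * q ^ (-(k : ℤ))) * (qPochInf μ q / qPochInf ν q) := by
  rw [qBinomialSeries, ← tsum_mul_right]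
  refine tsum_congr fun l => ?_
  rw [phiInfW, qBinomialCoeff, mul_pow, ← zpow_natCast (q ^ _), ← zpow_mul]
  ring_nf

theorem stmt_3_general (q mu nu : ℝ) (k : ℕ) (hq0 : 0 < q) (hq1 : q < 1)
    (hmu0 : 0 < mu) (hmu1 : mu < 1) (hnu : nu ≤ mu) (hmuk : mu < q ^ k) :
    ∑' l : ℕ, q ^ (-((k : ℤ) * l)) * phiInfW q mu nu l
      = qPoch (nu * q ^ (-(k : ℤ))) q k / qPoch (mu * q ^ (-(k : ℤ))) q k := by
  have hq : |q| < 1 := abs_lt.mpr ⟨by linarith, hq1⟩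
  have hz : |mu * q ^ (-(k : ℤ))| < 1 := by
    rw [zpow_neg, zpow_natCast, abs_of_pos (by positivity), ← div_eq_mul_inv,
      div_lt_one (by positivity)]
    exact hmuk
  have haz : nu / mu * (mu * q ^ (-(k : ℤ))) = nu * q ^ (-(k : ℤ)) := by field_simp
  have hmuInf := qPochInf_ne_zero hq fun i => (one_sub_mul_pow_pos hq0.le hq1.le hmu1 i).ne'
  have hnuInf := qPochInf_ne_zero hq fun i =>
    (one_sub_mul_pow_pos hq0.le hq1.le (hnu.trans_lt hmu1) i).ne'
  have hzk := qPoch_ne_zero hz hq.le k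
  rw [tsum_zpow_mul_phiInfW, qBinomialSeries_eq hq hz, haz,
    qPochInf_mul_zpow_neg _ hq0.ne' hq k, qPochInf_mul_zpow_neg _ hq0.ne' hq k]
  field_simp

/-- The k-th q-moment of one step of the first q-Hahn PushTASEP particle. -/
theorem stmt_3 (q mu nu : ℝ) (k : ℕ) (hq0 : 0 < q) (hq1 : q < 1)
    (hmu0 : 0 < mu) (hmu1 : mu < 1) (hnu : nu ≤ mu) (hk : 1 ≤ k) (hmuk : mu < q ^ k) :
    ∑' l : ℕ, q ^ (-((k : ℤ) * l)) * phiInfW q mu nu l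
      = qPoch (nu * q ^ (-(k : ℤ))) q k / qPoch (mu * q ^ (-(k : ℤ))) q k :=
  stmt_3_general q mu nu k hq0 hq1 hmu0 hmu1 hnu hmuk
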